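/- arXiv:1311.2838 — 2 statements merged into one kernel-verified Lean document; each statement's English description precedes it below -/
import Mathlib

section
/- Change-of-measure inequality: Let π be a probability measure on a measurable space A, let g: A → ℝ be measurable, and let λ > 0. Then for every probability measure ρ on A with KL(ρ‖π) < ∞ and such that g is ρ-integrable and e^{λg} is π-integrable: E_{f∼ρ} g(f) ≤ (1/λ)(KL(ρ‖π) + log E_{f∼π} e^{λ g(f)}). -/
/-! The inequality is Gibbs' inequality `0 ≤ KL(ρ‖π_g)` for the Gibbs measure
`dπ_g = e^{λg} dπ / E_π e^{λg}`, since `log (dρ/dπ_g) = log (dρ/dπ) - λg + log E_π e^{λg}`. -/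

open MeasureTheory

/-- Kullback-Leibler divergence (real-valued): `∫ log (dρ/dπ) dρ`. -/
noncomputable def klDiv {A : Type*} [MeasurableSpace A] (ρ π : Measure A) : ℝ :=
  ∫ a, Real.log (ρ.rnDeriv π a).toReal ∂ρ

namespace MeasureTheory

variable {α : Type*} [MeasurableSpace α] {μ ν : Measure α}

lemma integral_llr_nonneg [IsProbabilityMeasure μ] [IsProbabilityMeasure ν] (hμν : μ ≪ ν)
    (h_int : Integrable (llr μ ν) μ) : 0 ≤ ∫ x, llr μ ν x ∂μ := by
  simpa using InformationTheory.integral_llr_add_sub_measure_univ_nonneg hμν h_int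

lemma integral_le_integral_llr_add_log_integral_exp [IsProbabilityMeasure μ] [SigmaFinite ν]
    {f : α → ℝ} (hμν : μ ≪ ν) (h_int : Integrable (llr μ ν) μ) (hfμ : Integrable f μ)
    (hfν : Integrable (fun x ↦ Real.exp (f x)) ν) :
    ∫ x, f x ∂μ ≤ ∫ x, llr μ ν x ∂μ + Real.log (∫ x, Real.exp (f x) ∂ν) := by
  have : NeZero ν :=
    ⟨fun hν ↦ IsProbabilityMeasure.ne_zero μ (Measure.absolutelyContinuous_zero_iff.mp (hν ▸ hμν))⟩
  have : IsProbabilityMeasure (ν.tilted f) := isProbabilityMeasure_tilted hfν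
  have h_gibbs := integral_llr_nonneg (hμν.trans (absolutelyContinuous_tilted hfν))
    (integrable_llr_tilted_right hμν hfμ h_int hfν)
  rw [integral_llr_tilted_right hμν hfμ hfν h_int] at h_gibbs
  linarith

end MeasureTheory

theorem change_of_measure_general {A : Type*} [MeasurableSpace A]
    (π ρ : Measure A) [IsProbabilityMeasure π] [IsProbabilityMeasure ρ]
    (g : A → ℝ) (lam : ℝ) (hlam : 0 < lam)
    (hac : ρ ≪ π)
    (hKL : Integrable (fun a => Real.log (ρ.rnDeriv π a).toReal) ρ)
    (hgint : Integrable g ρ)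
    (hexp : Integrable (fun a => Real.exp (lam * g a)) π) :
    ∫ a, g a ∂ρ ≤ (1 / lam) * (klDiv ρ π + Real.log (∫ a, Real.exp (lam * g a) ∂π)) := by
  have h := integral_le_integral_llr_add_log_integral_exp hac hKL (hgint.const_mul lam) hexp
  rw [integral_const_mul] at h
  rw [one_div, inv_mul_eq_div, le_div_iff₀ hlam, mul_comm]
  exact h

/-- Change-of-measure inequality:
`E_{f∼ρ} g(f) ≤ (1/λ)(KL(ρ‖π) + log E_{f∼π} e^{λ g(f)})`. -/
theorem change_of_measure {A : Type*} [MeasurableSpace A]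
    (π ρ : Measure A) [IsProbabilityMeasure π] [IsProbabilityMeasure ρ]
    (g : A → ℝ) (hg : Measurable g) (lam : ℝ) (hlam : 0 < lam)
    (hac : ρ ≪ π)
    (hKL : Integrable (fun a => Real.log (ρ.rnDeriv π a).toReal) ρ)
    (hgint : Integrable g ρ)
    (hexp : Integrable (fun a => Real.exp (lam * g a)) π) :
    ∫ a, g a ∂ρ ≤ (1 / lam) * (klDiv ρ π + Real.log (∫ a, Real.exp (lam * g a) ∂π)) :=
  change_of_measure_general π ρ g lam hlam hac hKL hgint hexp
end

section
/- Gibbs risk under truncated squared loss dominates half the risk of the mean predictor: Let Z be a real-valued Gaussian random variable with mean m and variance s² ≥ 0 (in particular Z = ⟨h, x⟩ with h ∼ N(μ, Σ), m = ⟨μ, x⟩), and let y ∈ ℝ. Then E[min{(y − Z)², 1}] ≥ (1/2) min{(y − m)², 1}. -/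
open MeasureTheory ProbabilityTheory NNReal

lemma trunc_key (m y z : ℝ) :
    min ((y - m) ^ 2) 1 ≤ min ((y - z) ^ 2) 1 + min ((y - (2 * m - z)) ^ 2) 1 := by
  rcases le_or_gt ((y - z) ^ 2) 1 with h1 | h1
  · rcases le_or_gt ((y - (2 * m - z)) ^ 2) 1 with h2 | h2
    · rw [min_eq_left h1, min_eq_left h2]
      have : min ((y - m) ^ 2) 1 ≤ (y - m) ^ 2 := min_le_left _ _
      nlinarith [sq_nonneg (z - m)]
    · rw [min_eq_left h1, min_eq_right h2.le]
      have : min ((y - m) ^ 2) 1 ≤ 1 := min_le_right _ _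
      nlinarith [sq_nonneg (y - z)]
  · rw [min_eq_right h1.le]
    have : min ((y - m) ^ 2) 1 ≤ 1 := min_le_right _ _
    have h0 : (0:ℝ) ≤ min ((y - (2 * m - z)) ^ 2) 1 := le_min (sq_nonneg _) one_pos.le
    linarith

/-- Gibbs risk under truncated squared loss dominates half the risk of the mean
predictor: if `Z` is a real-valued Gaussian random variable with mean `m` and variance
`v ≥ 0`, then for any label `y`, `E[min{(y - Z)², 1}] ≥ (1/2) min{(y - m)², 1}`. -/
theorem truncated_squared_loss_gibbs_bound (m : ℝ) (v : ℝ≥0) (y : ℝ) :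
    (1 / 2 : ℝ) * min ((y - m) ^ 2) 1 ≤
      ∫ z, min ((y - z) ^ 2) 1 ∂(gaussianReal m v) := by
  set μ := gaussianReal m v with hμdef
  set f : ℝ → ℝ := fun z => min ((y - z) ^ 2) 1 with hf
  have hfc : Continuous f := by
    apply Continuous.min _ continuous_const
    fun_prop
  have hfint : Integrable f μ := by
    refine Integrable.mono' (integrable_const (1:ℝ)) hfc.aestronglyMeasurable ?_
    filter_upwards with z
    rw [Real.norm_eq_abs, abs_of_nonneg (le_min (sq_nonneg _) one_pos.le)]
    exact min_le_right _ _
  have hg : Measurable fun z : ℝ => 2 * m - z := by fun_prop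
  have hmap : μ.map (fun z : ℝ => 2 * m - z) = μ := by
    have h1 : (fun z : ℝ => 2 * m - z) = (fun z : ℝ => z + 2 * m) ∘ (fun z : ℝ => -1 * z) := by
      ext z; simp; ring
    rw [hμdef, h1, ← Measure.map_map (by fun_prop) (by fun_prop),
      gaussianReal_map_const_mul, gaussianReal_map_add_const]
    congr 1
    · ring
    · ext : 1; push_cast; ring
  have heq : ∫ z, f (2 * m - z) ∂μ = ∫ z, f z ∂μ := by
    conv_rhs => rw [← hmap]
    rw [integral_map hg.aemeasurable hfc.aestronglyMeasurable]
  have hint2 : Integrable (fun z => f (2 * m - z)) μ := by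
    have h := hfint
    rw [← hmap] at h
    exact (integrable_map_measure hfc.aestronglyMeasurable hg.aemeasurable).mp h
  have hsum : min ((y - m) ^ 2) 1 ≤ ∫ z, (f z + f (2 * m - z)) ∂μ := by
    have := integral_mono (g := fun z => f z + f (2 * m - z))
      (integrable_const (min ((y - m) ^ 2) 1)) (hfint.add hint2)
      (fun z => trunc_key m y z)
    simpa [integral_const, measure_univ] using this
  rw [integral_add hfint hint2, heq] at hsum
  linarith
end
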